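/- Let α > 0 be irrational, let p_k/q_k be the convergents of the continued fraction expansion of α (with p₀ = 1, q₀ = 0, p₁ = ⌊α⌋, q₁ = 1) and let r_k be the partial quotients (α = r₁ + 1/(r₂ + ...)). Then the series Σ_{k≥0} (p_k − α q_k)² r_{k+1} converges and equals α. -/

import Mathlib

/-- Iterates of the Gauss map starting from `α`: `x₀ = α`, `x_{n+1} = 1/(x_n - ⌊x_n⌋)`.
The partial quotient `r_{k+1}` of the continued fraction `α = r₁ + 1/(r₂ + ⋯)` is
`⌊x_k⌋` (so `r₁ = ⌊α⌋ = ⌊x₀⌋`, `r₂ = ⌊x₁⌋`, …). -/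
noncomputable def gaussIter (α : ℝ) : ℕ → ℝ
  | 0 => α
  | n + 1 => 1 / (gaussIter α n - ⌊gaussIter α n⌋)

/-- The partial quotient `r_{k+1}`. -/
noncomputable def r (α : ℝ) (k : ℕ) : ℤ := ⌊gaussIter α k⌋

/-- Numerators of the convergents: `p₀ = 1`, `p₁ = ⌊α⌋ = r₁`,
`p_{k+2} = r_{k+2} p_{k+1} + p_k`. -/
noncomputable def p (α : ℝ) : ℕ → ℤ
  | 0 => 1
  | 1 => ⌊α⌋
  | k + 2 => r α (k + 1) * p α (k + 1) + p α k

/-- Denominators of the convergents: `q₀ = 0`, `q₁ = 1`,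
`q_{k+2} = r_{k+2} q_{k+1} + q_k`. -/
noncomputable def q (α : ℝ) : ℕ → ℤ
  | 0 => 0
  | 1 => 1
  | k + 2 => r α (k + 1) * q α (k + 1) + q α k

/-!
Write `x_k = gaussIter α k`, `f_k = fract x_k` and `E_k = p_k - α q_k`. Since `x_{k+1} = 1 / f_k`,
the recurrence of the convergents gives `E_{k+1} = -E_k f_k`, i.e. `x_{k+1} E_{k+1} = -E_k`.
As `r_k = x_k - f_k`, the `k`-th term is `E_k² x_k + E_k E_{k+1}`, so the series telescopes and its
`n`-th partial sum is `α + E_n E_{n+1}`. The products `E_n E_{n+1}` shrink at least by the factor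
`f_n f_{n+1} = f_{n+1} / (r_{n+1} + f_{n+1}) ≤ 1/2`, hence tend to `0`; all terms but the first are
nonnegative because `r_k ≥ 1` for `k ≥ 1`, so the convergence of the partial sums is a `HasSum`.
-/

open Filter Finset Topology

lemma hasSum_of_tendsto_sum_range_of_nonneg_succ {f : ℕ → ℝ} {a : ℝ} (hf : ∀ k, 0 ≤ f (k + 1))
    (h : Tendsto (fun n => ∑ k ∈ range n, f k) atTop (𝓝 a)) : HasSum f a := by
  rw [← hasSum_nat_add_iff' 1, hasSum_iff_tendsto_nat_of_nonneg hf, sum_range_one]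
  refine (((tendsto_add_atTop_iff_nat 1).2 h).sub_const (f 0)).congr fun n => ?_
  rw [sum_range_succ']
  ring

noncomputable def cfError (α : ℝ) (k : ℕ) : ℝ := p α k - α * q α k

section

variable {α : ℝ}

lemma gaussIter_succ (α : ℝ) (k : ℕ) : gaussIter α (k + 1) = (Int.fract (gaussIter α k))⁻¹ := by
  rw [gaussIter, Int.self_sub_floor, one_div]

lemma irrational_gaussIter (hα : Irrational α) : ∀ k, Irrational (gaussIter α k)
  | 0 => hα
  | k + 1 => by
    rw [gaussIter_succ, Int.fract]
    exact ((irrational_gaussIter hα k).sub_intCast _).inv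

lemma fract_gaussIter_pos (hα : Irrational α) (k : ℕ) : 0 < Int.fract (gaussIter α k) :=
  Int.fract_pos.2 ((irrational_gaussIter hα k).ne_int _)

lemma gaussIter_succ_mul_fract (hα : Irrational α) (k : ℕ) :
    gaussIter α (k + 1) * Int.fract (gaussIter α k) = 1 := by
  rw [gaussIter_succ]
  exact inv_mul_cancel₀ (fract_gaussIter_pos hα k).ne'

lemma one_lt_gaussIter_succ (hα : Irrational α) (k : ℕ) : 1 < gaussIter α (k + 1) := by
  rw [gaussIter_succ]
  exact one_lt_inv₀ (fract_gaussIter_pos hα k) |>.2 (Int.fract_lt_one _)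

lemma one_le_r_succ (hα : Irrational α) (k : ℕ) : 1 ≤ r α (k + 1) :=
  Int.le_floor.2 (by exact_mod_cast (one_lt_gaussIter_succ hα k).le)

lemma fract_gaussIter_mul_fract_gaussIter_succ_le (hα : Irrational α) (k : ℕ) :
    Int.fract (gaussIter α k) * Int.fract (gaussIter α (k + 1)) ≤ 1 / 2 := by
  have hx : (r α (k + 1) : ℝ) + Int.fract (gaussIter α (k + 1)) = gaussIter α (k + 1) :=
    Int.floor_add_fract _
  have hr : (1 : ℝ) ≤ r α (k + 1) := by exact_mod_cast one_le_r_succ hα k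
  have hf := Int.fract_lt_one (gaussIter α (k + 1))
  nlinarith [gaussIter_succ_mul_fract hα k, fract_gaussIter_pos hα k]

lemma cfError_add_two (α : ℝ) (k : ℕ) :
    cfError α (k + 2) = r α (k + 1) * cfError α (k + 1) + cfError α k := by
  simp only [cfError, p, q]
  push_cast
  ring

lemma cfError_succ (hα : Irrational α) :
    ∀ k, cfError α (k + 1) = -cfError α k * Int.fract (gaussIter α k)
  | 0 => by
    simp only [cfError, p, q, gaussIter, Int.fract]
    push_cast
    ring
  | k + 1 => by
    have hr : (r α (k + 1) : ℝ) = gaussIter α (k + 1) - Int.fract (gaussIter α (k + 1)) :=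
      (Int.self_sub_fract _).symm
    rw [cfError_add_two, hr]
    linear_combination gaussIter α (k + 1) * cfError_succ hα k
      - cfError α k * gaussIter_succ_mul_fract hα k

lemma gaussIter_succ_mul_cfError_succ (hα : Irrational α) (k : ℕ) :
    gaussIter α (k + 1) * cfError α (k + 1) = -cfError α k := by
  linear_combination gaussIter α (k + 1) * cfError_succ hα k
    - cfError α k * gaussIter_succ_mul_fract hα k

lemma sum_range_succ_cfError_sq_mul_r (hα : Irrational α) (n : ℕ) :
    ∑ k ∈ range (n + 1), cfError α k ^ 2 * r α k = α + cfError α n * cfError α (n + 1) := by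
  induction n with
  | zero =>
    simp only [zero_add, sum_range_one, cfError_succ hα 0]
    simp only [cfError, p, q, r, gaussIter, Int.fract]
    push_cast
    ring
  | succ n ih =>
    have hr : (r α (n + 1) : ℝ) = gaussIter α (n + 1) - Int.fract (gaussIter α (n + 1)) :=
      (Int.self_sub_fract _).symm
    rw [sum_range_succ, ih, hr]
    linear_combination cfError α (n + 1) * gaussIter_succ_mul_cfError_succ hα n
      - cfError α (n + 1) * cfError_succ hα (n + 1)

lemma cfError_succ_mul_cfError_succ_succ (hα : Irrational α) (k : ℕ) :
    cfError α (k + 1) * cfError α (k + 2) =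
      cfError α k * cfError α (k + 1) *
        (Int.fract (gaussIter α k) * Int.fract (gaussIter α (k + 1))) := by
  rw [cfError_succ hα (k + 1), cfError_succ hα k]
  ring

lemma tendsto_cfError_mul_cfError_succ (hα : Irrational α) :
    Tendsto (fun n => cfError α n * cfError α (n + 1)) atTop (𝓝 0) := by
  refine (summable_of_ratio_norm_eventually_le (r := 1 / 2) (by norm_num)
    (Eventually.of_forall fun k => ?_)).tendsto_atTop_zero
  have hf := mul_pos (fract_gaussIter_pos hα k) (fract_gaussIter_pos hα (k + 1))
  rw [cfError_succ_mul_cfError_succ_succ hα, norm_mul, Real.norm_of_nonneg hf.le, mul_comm]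
  exact mul_le_mul_of_nonneg_right (fract_gaussIter_mul_fract_gaussIter_succ_le hα k)
    (norm_nonneg _)

end

theorem sum_cf_sq (α : ℝ) (hirr : Irrational α) :
    HasSum (fun k : ℕ => ((p α k : ℝ) - α * q α k) ^ 2 * (r α k : ℝ)) α := by
  show HasSum (fun k => cfError α k ^ 2 * (r α k : ℝ)) α
  refine hasSum_of_tendsto_sum_range_of_nonneg_succ (fun k => ?_) ?_
  · have hr : (0 : ℝ) ≤ r α (k + 1) := by exact_mod_cast zero_le_one.trans (one_le_r_succ hirr k)
    positivity
  · refine (tendsto_add_atTop_iff_nat 1).1 ?_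
    simpa only [sum_range_succ_cfError_sq_mul_r hirr, add_zero] using
      (tendsto_cfError_mul_cfError_succ hirr).const_add α
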